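/- arXiv:2104.08907 — 5 statements merged into one kernel-verified Lean document; each statement's English description precedes it below -/
import Mathlib

section
/- A (not necessarily commutative) ring R satisfies PBLR-1 if and only if R is a multiplication ring. -/
set_option linter.unnecessarySimpa false

namespace PBL

variable {R : Type*} [NonUnitalRing R]

/-- The right residual `I → J = {x | x·i ∈ J for all i ∈ I}`, a two-sided ideal. -/
def rres (I J : TwoSidedIdeal R) : TwoSidedIdeal R :=
  TwoSidedIdeal.mk' {x | ∀ i ∈ I, x * i ∈ J}
    (fun i _ => by simpa using J.zero_mem)
    (fun {x y} hx hy i hi => by simpa [add_mul] using J.add_mem (hx i hi) (hy i hi))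
    (fun {x} hx i hi => by simpa [neg_mul] using J.neg_mem (hx i hi))
    (fun {r x} hx i hi => by simpa [mul_assoc] using J.mul_mem_left r _ (hx i hi))
    (fun {x r} hx i hi => by
      have : x * (r * i) ∈ J := hx _ (I.mul_mem_left r i hi)
      simpa [mul_assoc] using this)

/-- The left residual `I ⇝ J = {x | i·x ∈ J for all i ∈ I}`, a two-sided ideal. -/
def lres (I J : TwoSidedIdeal R) : TwoSidedIdeal R :=
  TwoSidedIdeal.mk' {x | ∀ i ∈ I, i * x ∈ J}
    (fun i _ => by simpa using J.zero_mem)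
    (fun {x y} hx hy i hi => by simpa [mul_add] using J.add_mem (hx i hi) (hy i hi))
    (fun {x} hx i hi => by simpa [mul_neg] using J.neg_mem (hx i hi))
    (fun {r x} hx i hi => by
      have : (i * r) * x ∈ J := hx _ (I.mul_mem_right i r hi)
      simpa [mul_assoc] using this)
    (fun {x r} hx i hi => by
      have : (i * x) * r ∈ J := J.mul_mem_right _ r (hx i hi)
      simpa [mul_assoc] using this)

/-- The product `I·J` of two two-sided ideals: the two-sided ideal generated by (equivalently,
the additive span of) the set of products `i·j` with `i ∈ I`, `j ∈ J`. -/
def prod (I J : TwoSidedIdeal R) : TwoSidedIdeal R :=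
  TwoSidedIdeal.span {x | ∃ i ∈ I, ∃ j ∈ J, x = i * j}

variable (R) in
/-- PBLR-1: `I ∩ J = I·(I ⇝ J) = (I → J)·I` for all two-sided ideals `I`, `J`. -/
def PBLR1 : Prop :=
  ∀ I J : TwoSidedIdeal R, I ⊓ J = prod I (lres I J) ∧ I ⊓ J = prod (rres I J) I

variable (R) in
/-- A multiplication ring: whenever `I ⊆ J` there are ideals `K`, `K'` with
`I = J·K = K'·J`. -/
def IsMulRing : Prop :=
  ∀ I J : TwoSidedIdeal R, I ≤ J →
    ∃ K K' : TwoSidedIdeal R, I = prod J K ∧ I = prod K' J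


lemma mem_prod {I J : TwoSidedIdeal R} {i j : R} (hi : i ∈ I) (hj : j ∈ J) :
    i * j ∈ prod I J :=
  TwoSidedIdeal.subset_span ⟨i, hi, j, hj, rfl⟩

lemma prod_le {I J L : TwoSidedIdeal R} (h : ∀ i ∈ I, ∀ j ∈ J, i * j ∈ L) :
    prod I J ≤ L := fun x hx => by
  rw [prod, TwoSidedIdeal.mem_span_iff] at hx
  exact hx L (by rintro y ⟨i, hi, j, hj, rfl⟩; exact h i hi j hj)

lemma mem_lres {I J : TwoSidedIdeal R} {x : R} :
    x ∈ lres I J ↔ ∀ i ∈ I, i * x ∈ J := by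
  simp [lres, TwoSidedIdeal.mem_mk']

lemma mem_rres {I J : TwoSidedIdeal R} {x : R} :
    x ∈ rres I J ↔ ∀ i ∈ I, x * i ∈ J := by
  simp [rres, TwoSidedIdeal.mem_mk']

/-- `R` satisfies PBLR-1 iff `R` is a multiplication ring. -/
theorem stmt_5 {R : Type*} [NonUnitalRing R] :
    PBLR1 R ↔ IsMulRing R := by
  constructor
  · intro h I J hIJ
    obtain ⟨h1, h2⟩ := h J I
    rw [inf_eq_right.mpr hIJ] at h1 h2
    exact ⟨lres J I, rres J I, h1, h2⟩
  · intro h I J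
    obtain ⟨K, K', hK, hK'⟩ := h (I ⊓ J) I inf_le_left
    have hKle : K ≤ lres I J := fun x hx => mem_lres.mpr fun i hi =>
      (hK ▸ mem_prod hi hx : i * x ∈ I ⊓ J).2
    have hK'le : K' ≤ rres I J := fun x hx => mem_rres.mpr fun i hi =>
      (hK' ▸ mem_prod hx hi : x * i ∈ I ⊓ J).2
    constructor
    · refine le_antisymm ?_ (prod_le fun i hi x hx => ?_)
      · rw [hK]; exact prod_le fun i hi x hx => mem_prod hi (hKle hx)
      · exact ⟨I.mul_mem_right i x hi, mem_lres.mp hx i hi⟩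
    · refine le_antisymm ?_ (prod_le fun x hx i hi => ?_)
      · rw [hK']; exact prod_le fun x hx i hi => mem_prod (hK'le hx) hi
      · exact ⟨I.mul_mem_left x i hi, mem_rres.mp hx i hi⟩


end PBL
end

section
/- If R is a multiplication ring with identity, then the ring Mₙ(R) of n × n matrices over R is a multiplication ring. -/
set_option linter.unnecessarySimpa false

namespace PBL

variable {R : Type*} [NonUnitalRing R]

open Matrix in
private lemma stdBasisMatrix_mem_matrix {R : Type*} [Ring R] {n : ℕ}
    {I : TwoSidedIdeal R} {x : R} (hx : x ∈ I) (k l : Fin n) :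
    single k l x ∈ I.matrix (Fin n) := by
  rw [TwoSidedIdeal.mem_matrix]
  intro a b
  dsimp [Matrix.single]
  split
  · exact hx
  · exact I.zero_mem

open Matrix in
private lemma prod_matricesOver {R : Type*} [Ring R] {n : ℕ} (I J : TwoSidedIdeal R) :
    prod (I.matrix (Fin n)) (J.matrix (Fin n))
      = (prod I J).matrix (Fin n) := by
  apply le_antisymm
  · intro M hM
    rw [prod, TwoSidedIdeal.mem_span_iff] at hM
    apply hM
    rintro _ ⟨A, hA, B, hB, rfl⟩
    rw [TwoSidedIdeal.mem_matrix] at hA hB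
    rw [SetLike.mem_coe, TwoSidedIdeal.mem_matrix]
    intro i j
    rw [Matrix.mul_apply]
    refine sum_mem fun k _ => ?_
    exact TwoSidedIdeal.subset_span ⟨A i k, hA i k, B k j, hB k j, rfl⟩
  · intro M hM
    rw [TwoSidedIdeal.mem_matrix] at hM
    have key : ∀ x ∈ prod I J, ∀ k l : Fin n,
        single k l x ∈ prod (I.matrix (Fin n)) (J.matrix (Fin n)) := by
      intro x hx k l
      rw [prod, TwoSidedIdeal.mem_span_iff] at hx
      set P := prod (I.matrix (Fin n)) (J.matrix (Fin n)) with hP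
      let S : TwoSidedIdeal R := TwoSidedIdeal.mk' {y | single k l y ∈ P}
        (by simpa using P.zero_mem)
        (fun {a b} ha hb => by
          simpa [single_add] using P.add_mem ha hb)
        (fun {a} ha => by
          have : (-1 : Matrix (Fin n) (Fin n) R) * single k l a ∈ P :=
            P.mul_mem_left _ _ ha
          have h2 : (-1 : Matrix (Fin n) (Fin n) R) * single k l a
              = single k l (-a) := by
            ext i j
            by_cases hc : k = i ∧ l = j <;> simp [Matrix.single, hc]
          rwa [h2] at this)
        (fun {r a} ha => by
          have : Matrix.diagonal (fun _ => r) * single k l a ∈ P :=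
            P.mul_mem_left _ _ ha
          have h2 : Matrix.diagonal (fun _ => r) * single k l a
              = single k l (r * a) := by
            ext i j
            simp [Matrix.diagonal_mul, Matrix.single, mul_ite]
          rwa [h2] at this)
        (fun {a r} ha => by
          have : single k l a * Matrix.diagonal (fun _ => r) ∈ P :=
            P.mul_mem_right _ _ ha
          have h2 : single k l a * Matrix.diagonal (fun _ => r)
              = single k l (a * r) := by
            ext i j
            simp [Matrix.mul_diagonal, Matrix.single, ite_mul]
          rwa [h2] at this)
      have hxS : x ∈ S := by
        apply hx
        rintro _ ⟨i, hi, j, hj, rfl⟩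
        rw [SetLike.mem_coe, TwoSidedIdeal.mem_mk']
        show single k l (i * j) ∈ P
        rw [← Matrix.single_mul_single_same (j := l)]
        exact TwoSidedIdeal.subset_span
          ⟨_, stdBasisMatrix_mem_matrix hi k l,
           _, stdBasisMatrix_mem_matrix hj l l, rfl⟩
      rwa [TwoSidedIdeal.mem_mk'] at hxS
    rw [Matrix.matrix_eq_sum_single M]
    exact sum_mem fun k _ => sum_mem fun l _ => key _ (hM k l) k l

/-- if `R` is a multiplication ring with identity, then the matrix ring
`Mₙ(R)` is a multiplication ring. -/
theorem stmt_6 {R : Type*} [Ring R] (n : ℕ) (h : IsMulRing R) :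
    IsMulRing (Matrix (Fin n) (Fin n) R) := by
  cases n with
  | zero =>
    intro I J _
    refine ⟨⊤, ⊤, ?_, ?_⟩ <;>
      · ext M
        have hM : M = 0 := by ext i _; exact i.elim0
        subst hM
        exact iff_of_true (TwoSidedIdeal.zero_mem _) (TwoSidedIdeal.zero_mem _)
  | succ m =>
    intro I J hIJ
    set e := TwoSidedIdeal.equivMatrix (R := R) (n := Fin (m + 1)) with he
    obtain ⟨A, rfl⟩ : ∃ A, I = A.matrix (Fin (m + 1)) :=
      ⟨e.symm I, (e.apply_symm_apply I).symm⟩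
    obtain ⟨B, rfl⟩ : ∃ B, J = B.matrix (Fin (m + 1)) :=
      ⟨e.symm J, (e.apply_symm_apply J).symm⟩
    have hAB : A ≤ B := by
      intro a ha
      have h1 : (Matrix.of fun _ _ => a) ∈ A.matrix (Fin (m + 1)) := by
        rw [TwoSidedIdeal.mem_matrix]; intro i j; exact ha
      have h2 := hIJ h1
      rw [TwoSidedIdeal.mem_matrix] at h2
      exact h2 0 0
    obtain ⟨K, K', hK, hK'⟩ := h A B hAB
    exact ⟨K.matrix _, K'.matrix _,
      by rw [prod_matricesOver, ← hK], by rw [prod_matricesOver, ← hK']⟩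

end PBL
end

section
/- Let R be a ring satisfying PBLR-2. Then for all two-sided ideals I, J of R with I ∩ J = {0}, one has I^* + J^* = R and I^- + J^- = R (i.e., R satisfies PBLR-3). -/
set_option linter.unnecessarySimpa false

namespace PBL

variable {R : Type*} [NonUnitalRing R]

/-- The annihilator `I^* = {x | x·i = 0 for all i ∈ I}`, a two-sided ideal. -/
def annStar (I : TwoSidedIdeal R) : TwoSidedIdeal R :=
  TwoSidedIdeal.mk' {x | ∀ i ∈ I, x * i = 0}
    (fun i _ => zero_mul i)
    (fun {x y} hx hy i hi => by rw [add_mul, hx i hi, hy i hi, add_zero])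
    (fun {x} hx i hi => by rw [neg_mul, hx i hi, neg_zero])
    (fun {r x} hx i hi => by rw [mul_assoc, hx i hi, mul_zero])
    (fun {x r} hx i hi => by rw [mul_assoc]; exact hx _ (I.mul_mem_left r i hi))

/-- The annihilator `I^- = {x | i·x = 0 for all i ∈ I}`, a two-sided ideal. -/
def annMinus (I : TwoSidedIdeal R) : TwoSidedIdeal R :=
  TwoSidedIdeal.mk' {x | ∀ i ∈ I, i * x = 0}
    (fun i _ => mul_zero i)
    (fun {x y} hx hy i hi => by rw [mul_add, hx i hi, hy i hi, add_zero])
    (fun {x} hx i hi => by rw [mul_neg, hx i hi, neg_zero])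
    (fun {r x} hx i hi => by rw [← mul_assoc]; exact hx _ (I.mul_mem_right i r hi))
    (fun {x r} hx i hi => by rw [← mul_assoc, hx i hi, zero_mul])

variable (R) in
/-- PBLR-2: `(I → J) + (J → I) = R` and `(I ⇝ J) + (J ⇝ I) = R` for all two-sided
ideals `I`, `J` (the sum of two-sided ideals being their join). -/
def PBLR2 : Prop :=
  ∀ I J : TwoSidedIdeal R, rres I J ⊔ rres J I = ⊤ ∧ lres I J ⊔ lres J I = ⊤

/-- if `R` satisfies PBLR-2, then for all two-sided ideals `I`, `J` with
`I ∩ J = {0}` one has `I^* + J^* = R` and `I^- + J^- = R`. -/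
theorem stmt_9 {R : Type*} [NonUnitalRing R] (h : PBLR2 R) :
    ∀ I J : TwoSidedIdeal R, I ⊓ J = ⊥ →
      annStar I ⊔ annStar J = ⊤ ∧ annMinus I ⊔ annMinus J = ⊤ := by
  intro I J hIJ
  have key : ∀ {A B : TwoSidedIdeal R}, A ⊓ B = ⊥ →
      rres A B = annStar A ∧ lres A B = annMinus A := by
    intro A B hAB
    constructor
    · ext x
      simp only [rres, annStar, TwoSidedIdeal.mem_mk']
      constructor
      · intro hx i hi
        have h1 : x * i ∈ A := A.mul_mem_left x i hi
        have h2 : x * i ∈ A ⊓ B := by rw [TwoSidedIdeal.mem_inf]; exact ⟨h1, hx i hi⟩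
        rw [hAB, TwoSidedIdeal.mem_bot] at h2
        exact h2
      · intro hx i hi
        rw [hx i hi]; exact B.zero_mem
    · ext x
      simp only [lres, annMinus, TwoSidedIdeal.mem_mk']
      constructor
      · intro hx i hi
        have h1 : i * x ∈ A := A.mul_mem_right i x hi
        have h2 : i * x ∈ A ⊓ B := by rw [TwoSidedIdeal.mem_inf]; exact ⟨h1, hx i hi⟩
        rw [hAB, TwoSidedIdeal.mem_bot] at h2
        exact h2
      · intro hx i hi
        rw [hx i hi]; exact B.zero_mem
  have hJI : J ⊓ I = ⊥ := by rw [inf_comm]; exact hIJ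
  obtain ⟨h1, h2⟩ := h I J
  rw [(key hIJ).1, (key hJI).1] at h1
  rw [(key hIJ).2, (key hJI).2] at h2
  exact ⟨h1, h2⟩


end PBL
end

section
/- A ring R satisfies PBLR-2 if and only if for every two-sided ideal I of R, the quotient ring R/I satisfies PBLR-3. -/
set_option linter.unnecessarySimpa false

namespace PBL

variable {R : Type*} [NonUnitalRing R]

variable (R) in
/-- PBLR-3: `I ∩ J = {0}` implies `I^* + J^* = R` and `I^- + J^- = R`. -/
def PBLR3 : Prop :=
  ∀ I J : TwoSidedIdeal R, I ⊓ J = ⊥ →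
    annStar I ⊔ annStar J = ⊤ ∧ annMinus I ⊔ annMinus J = ⊤

section Aux

lemma exists_coe {c : RingCon R} (x : c.Quotient) : ∃ a : R, (a : c.Quotient) = x :=
  Quotient.inductionOn x fun a => ⟨a, rfl⟩

lemma coe_eq_zero_iff {K : TwoSidedIdeal R} {a : R} :
    (a : K.ringCon.Quotient) = 0 ↔ a ∈ K := by
  rw [← RingCon.coe_zero, RingCon.eq, K.rel_iff, sub_zero]

/-- Preimage of a two-sided ideal of the quotient. -/
def comapQuot (K : TwoSidedIdeal R) (I : TwoSidedIdeal K.ringCon.Quotient) :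
    TwoSidedIdeal R :=
  TwoSidedIdeal.mk' {x | (x : K.ringCon.Quotient) ∈ I}
    (by simpa using I.zero_mem)
    (fun {x y} hx hy => by simpa [RingCon.coe_add] using I.add_mem hx hy)
    (fun {x} hx => by simpa [RingCon.coe_neg] using I.neg_mem hx)
    (fun {r x} hx => by simpa [RingCon.coe_mul] using I.mul_mem_left _ _ hx)
    (fun {x r} hx => by simpa [RingCon.coe_mul] using I.mul_mem_right _ _ hx)

lemma mem_comapQuot {K : TwoSidedIdeal R} {I : TwoSidedIdeal K.ringCon.Quotient} {x : R} :
    x ∈ comapQuot K I ↔ (x : K.ringCon.Quotient) ∈ I :=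
  TwoSidedIdeal.mem_mk' _ _ _ _ _ _ x

/-- Image of a two-sided ideal in the quotient. -/
def mapQuot (K I : TwoSidedIdeal R) : TwoSidedIdeal K.ringCon.Quotient :=
  TwoSidedIdeal.mk' {x | ∃ i ∈ I, (i : K.ringCon.Quotient) = x}
    ⟨0, I.zero_mem, RingCon.coe_zero _⟩
    (fun {x y} hx hy => by
      obtain ⟨i, hi, rfl⟩ := hx
      obtain ⟨j, hj, rfl⟩ := hy
      exact ⟨i + j, I.add_mem hi hj, RingCon.coe_add _ _ _⟩)
    (fun {x} hx => by
      obtain ⟨i, hi, rfl⟩ := hx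
      exact ⟨-i, I.neg_mem hi, RingCon.coe_neg _ _⟩)
    (fun {r x} hx => by
      obtain ⟨i, hi, rfl⟩ := hx
      obtain ⟨s, rfl⟩ := exists_coe r
      exact ⟨s * i, I.mul_mem_left s i hi, RingCon.coe_mul _ _ _⟩)
    (fun {x r} hx => by
      obtain ⟨i, hi, rfl⟩ := hx
      obtain ⟨s, rfl⟩ := exists_coe r
      exact ⟨i * s, I.mul_mem_right i s hi, RingCon.coe_mul _ _ _⟩)

lemma mem_mapQuot {K I : TwoSidedIdeal R} {x : K.ringCon.Quotient} :
    x ∈ mapQuot K I ↔ ∃ i ∈ I, (i : K.ringCon.Quotient) = x :=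
  TwoSidedIdeal.mem_mk' _ _ _ _ _ _ x

lemma mem_annStar {I : TwoSidedIdeal R} {x : R} :
    x ∈ annStar I ↔ ∀ i ∈ I, x * i = 0 :=
  TwoSidedIdeal.mem_mk' _ _ _ _ _ _ x

lemma mem_annMinus {I : TwoSidedIdeal R} {x : R} :
    x ∈ annMinus I ↔ ∀ i ∈ I, i * x = 0 :=
  TwoSidedIdeal.mem_mk' _ _ _ _ _ _ x

end Aux

/-- `R` satisfies PBLR-2 iff every quotient of `R` by a two-sided ideal
satisfies PBLR-3. -/
theorem stmt_10 {R : Type*} [NonUnitalRing R] :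
    PBLR2 R ↔ ∀ I : TwoSidedIdeal R, PBLR3 I.ringCon.Quotient := by
  constructor
  · -- PBLR2 → quotients satisfy PBLR3
    intro h K I J hIJ
    set Q := K.ringCon.Quotient
    have hsub : ∀ {x : Q}, x ∈ I → x ∈ J → x = 0 := by
      intro x hxI hxJ
      have : x ∈ I ⊓ J := (TwoSidedIdeal.mem_inf _).2 ⟨hxI, hxJ⟩
      rw [hIJ] at this
      exact (TwoSidedIdeal.mem_bot _).1 this
    obtain ⟨h1, h2⟩ := h (comapQuot K I) (comapQuot K J)
    constructor
    · rw [eq_top_iff]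
      rintro x -
      obtain ⟨r, rfl⟩ := exists_coe x
      have hr : r ∈ rres (comapQuot K I) (comapQuot K J) ⊔
          rres (comapQuot K J) (comapQuot K I) := h1 ▸ TwoSidedIdeal.mem_top _
      obtain ⟨a, ha, b, hb, hab⟩ := TwoSidedIdeal.mem_sup.1 hr
      have haI : (a : Q) ∈ annStar I := by
        rw [mem_annStar]
        intro i hi
        obtain ⟨i', rfl⟩ := exists_coe i
        have hi' : i' ∈ comapQuot K I := mem_comapQuot.2 hi
        have h1 := mem_rres.1 ha i' hi'
        have h2 : a * i' ∈ comapQuot K I := (comapQuot K I).mul_mem_left a i' hi'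
        rw [← RingCon.coe_mul]
        exact hsub (mem_comapQuot.1 h2) (mem_comapQuot.1 h1)
      have hbJ : (b : Q) ∈ annStar J := by
        rw [mem_annStar]
        intro j hj
        obtain ⟨j', rfl⟩ := exists_coe j
        have hj' : j' ∈ comapQuot K J := mem_comapQuot.2 hj
        have h1 := mem_rres.1 hb j' hj'
        have h2 : b * j' ∈ comapQuot K J := (comapQuot K J).mul_mem_left b j' hj'
        rw [← RingCon.coe_mul]
        exact hsub (mem_comapQuot.1 h1) (mem_comapQuot.1 h2)
      have : (r : Q) = (a : Q) + (b : Q) := by rw [← RingCon.coe_add, hab]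
      rw [this]
      exact TwoSidedIdeal.mem_sup.2 ⟨_, haI, _, hbJ, rfl⟩
    · rw [eq_top_iff]
      rintro x -
      obtain ⟨r, rfl⟩ := exists_coe x
      have hr : r ∈ lres (comapQuot K I) (comapQuot K J) ⊔
          lres (comapQuot K J) (comapQuot K I) := h2 ▸ TwoSidedIdeal.mem_top _
      obtain ⟨a, ha, b, hb, hab⟩ := TwoSidedIdeal.mem_sup.1 hr
      have haI : (a : Q) ∈ annMinus I := by
        rw [mem_annMinus]
        intro i hi
        obtain ⟨i', rfl⟩ := exists_coe i
        have hi' : i' ∈ comapQuot K I := mem_comapQuot.2 hi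
        have h1 := mem_lres.1 ha i' hi'
        have h2 : i' * a ∈ comapQuot K I := (comapQuot K I).mul_mem_right i' a hi'
        rw [← RingCon.coe_mul]
        exact hsub (mem_comapQuot.1 h2) (mem_comapQuot.1 h1)
      have hbJ : (b : Q) ∈ annMinus J := by
        rw [mem_annMinus]
        intro j hj
        obtain ⟨j', rfl⟩ := exists_coe j
        have hj' : j' ∈ comapQuot K J := mem_comapQuot.2 hj
        have h1 := mem_lres.1 hb j' hj'
        have h2 : j' * b ∈ comapQuot K J := (comapQuot K J).mul_mem_right j' b hj'
        rw [← RingCon.coe_mul]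
        exact hsub (mem_comapQuot.1 h1) (mem_comapQuot.1 h2)
      have : (r : Q) = (a : Q) + (b : Q) := by rw [← RingCon.coe_add, hab]
      rw [this]
      exact TwoSidedIdeal.mem_sup.2 ⟨_, haI, _, hbJ, rfl⟩
  · -- quotients satisfy PBLR3 → PBLR2
    intro h I J
    set K := I ⊓ J with hK
    have hdisj : mapQuot K I ⊓ mapQuot K J = ⊥ := by
      rw [eq_bot_iff]
      intro x hx
      obtain ⟨hxI, hxJ⟩ := (TwoSidedIdeal.mem_inf _).1 hx
      obtain ⟨i, hi, rfl⟩ := mem_mapQuot.1 hxI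
      obtain ⟨j, hj, hji⟩ := mem_mapQuot.1 hxJ
      have hij : i - j ∈ K := by
        rw [← K.rel_iff, ← RingCon.eq, hji]
      have hiJ : i ∈ J := by
        have : (i - j) + j ∈ J := J.add_mem ((TwoSidedIdeal.mem_inf _).1 hij).2 hj
        simpa using this
      have : i ∈ K := (TwoSidedIdeal.mem_inf _).2 ⟨hi, hiJ⟩
      exact (TwoSidedIdeal.mem_bot _).2 (coe_eq_zero_iff.2 this)
    obtain ⟨h1, h2⟩ := h K (mapQuot K I) (mapQuot K J) hdisj
    have hKrres : ∀ k ∈ K, k ∈ rres I J ∧ k ∈ rres J I := by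
      intro k hk
      obtain ⟨hkI, hkJ⟩ := (TwoSidedIdeal.mem_inf _).1 hk
      exact ⟨mem_rres.2 fun i hi => J.mul_mem_right k i hkJ,
        mem_rres.2 fun j hj => I.mul_mem_right k j hkI⟩
    have hKlres : ∀ k ∈ K, k ∈ lres I J ∧ k ∈ lres J I := by
      intro k hk
      obtain ⟨hkI, hkJ⟩ := (TwoSidedIdeal.mem_inf _).1 hk
      exact ⟨mem_lres.2 fun i hi => J.mul_mem_left i k hkJ,
        mem_lres.2 fun j hj => I.mul_mem_left j k hkI⟩
    constructor
    · rw [eq_top_iff]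
      rintro r -
      have : (r : K.ringCon.Quotient) ∈ annStar (mapQuot K I) ⊔ annStar (mapQuot K J) :=
        h1 ▸ TwoSidedIdeal.mem_top _
      obtain ⟨x, hx, y, hy, hxy⟩ := TwoSidedIdeal.mem_sup.1 this
      obtain ⟨a, rfl⟩ := exists_coe x
      obtain ⟨b, rfl⟩ := exists_coe y
      have haI : a ∈ rres I J := by
        rw [mem_rres]
        intro i hi
        have := mem_annStar.1 hx (i : K.ringCon.Quotient) (mem_mapQuot.2 ⟨i, hi, rfl⟩)
        rw [← RingCon.coe_mul, coe_eq_zero_iff] at this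
        exact ((TwoSidedIdeal.mem_inf _).1 this).2
      have hbJ : b ∈ rres J I := by
        rw [mem_rres]
        intro j hj
        have := mem_annStar.1 hy (j : K.ringCon.Quotient) (mem_mapQuot.2 ⟨j, hj, rfl⟩)
        rw [← RingCon.coe_mul, coe_eq_zero_iff] at this
        exact ((TwoSidedIdeal.mem_inf _).1 this).1
      have hk : r - (a + b) ∈ K := by
        rw [← K.rel_iff, ← RingCon.eq, RingCon.coe_add, hxy]
      refine TwoSidedIdeal.mem_sup.2 ⟨a, haI, b + (r - (a + b)),
        (rres J I).add_mem hbJ (hKrres _ hk).2, by abel⟩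
    · rw [eq_top_iff]
      rintro r -
      have : (r : K.ringCon.Quotient) ∈ annMinus (mapQuot K I) ⊔ annMinus (mapQuot K J) :=
        h2 ▸ TwoSidedIdeal.mem_top _
      obtain ⟨x, hx, y, hy, hxy⟩ := TwoSidedIdeal.mem_sup.1 this
      obtain ⟨a, rfl⟩ := exists_coe x
      obtain ⟨b, rfl⟩ := exists_coe y
      have haI : a ∈ lres I J := by
        rw [mem_lres]
        intro i hi
        have := mem_annMinus.1 hx (i : K.ringCon.Quotient) (mem_mapQuot.2 ⟨i, hi, rfl⟩)
        rw [← RingCon.coe_mul, coe_eq_zero_iff] at this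
        exact ((TwoSidedIdeal.mem_inf _).1 this).2
      have hbJ : b ∈ lres J I := by
        rw [mem_lres]
        intro j hj
        have := mem_annMinus.1 hy (j : K.ringCon.Quotient) (mem_mapQuot.2 ⟨j, hj, rfl⟩)
        rw [← RingCon.coe_mul, coe_eq_zero_iff] at this
        exact ((TwoSidedIdeal.mem_inf _).1 this).1
      have hk : r - (a + b) ∈ K := by
        rw [← K.rel_iff, ← RingCon.eq, RingCon.coe_add, hxy]
      refine TwoSidedIdeal.mem_sup.2 ⟨a, haI, b + (r - (a + b)),
        (lres J I).add_mem hbJ (hKlres _ hk).2, by abel⟩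

end PBL
end

section
/- Every quotient of a pseudo BL-ring by a two-sided ideal is again a pseudo BL-ring. -/
set_option linter.unnecessarySimpa false

namespace PBL

variable {R : Type*} [NonUnitalRing R]

variable (R) in
/-- A ring is generated by idempotents if for every `x` there is an idempotent `e` with
`e·x = x = x·e`. -/
def GenByIdem : Prop :=
  ∀ x : R, ∃ e : R, e * e = e ∧ e * x = x ∧ x * e = x

variable (R) in
/-- A pseudo BL-ring: a ring generated by idempotents satisfying PBLR-1 and PBLR-2. -/
def IsPseudoBLRing : Prop :=
  GenByIdem R ∧ PBLR1 R ∧ PBLR2 R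

/-! ### Auxiliary machinery for quotients -/

section QuotAux

variable (I : TwoSidedIdeal R)

/-- The quotient map as a non-unital ring hom. -/
def qHom : R →ₙ+* I.ringCon.Quotient where
  toFun := I.ringCon.toQuotient
  map_mul' _ _ := rfl
  map_zero' := rfl
  map_add' _ _ := rfl

lemma qHom_surj : Function.Surjective (qHom I) := fun q =>
  Quot.inductionOn q fun a => ⟨a, by rfl⟩

/-- Image of a two-sided ideal under the quotient map, as a two-sided ideal. -/
def pushQ (A : TwoSidedIdeal R) : TwoSidedIdeal I.ringCon.Quotient :=
  TwoSidedIdeal.mk' (qHom I '' A)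
    ⟨0, A.zero_mem, map_zero _⟩
    (fun hx hy => by
      obtain ⟨a, ha, rfl⟩ := hx; obtain ⟨b, hb, rfl⟩ := hy
      exact ⟨a + b, A.add_mem ha hb, map_add _ _ _⟩)
    (fun hx => by obtain ⟨a, ha, rfl⟩ := hx; exact ⟨-a, A.neg_mem ha, map_neg _ _⟩)
    (fun {x y} hy => by
      obtain ⟨a, ha, rfl⟩ := hy
      obtain ⟨s, rfl⟩ := qHom_surj I x
      exact ⟨s * a, A.mul_mem_left _ _ ha, map_mul _ _ _⟩)
    (fun {x y} hx => by
      obtain ⟨a, ha, rfl⟩ := hx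
      obtain ⟨s, rfl⟩ := qHom_surj I y
      exact ⟨a * s, A.mul_mem_right _ _ ha, map_mul _ _ _⟩)

lemma mem_pushQ {A : TwoSidedIdeal R} {x} :
    x ∈ pushQ I A ↔ ∃ a ∈ A, qHom I a = x := by
  unfold pushQ
  erw [TwoSidedIdeal.mem_mk']
  simp only [Set.mem_image, SetLike.mem_coe]

lemma pushQ_comap (K : TwoSidedIdeal I.ringCon.Quotient) :
    pushQ I (K.comap (qHom I)) = K := by
  ext x
  rw [mem_pushQ]
  constructor
  · rintro ⟨a, ha, rfl⟩; exact (TwoSidedIdeal.mem_comap _).mp ha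
  · intro hx
    obtain ⟨a, rfl⟩ := qHom_surj I x
    exact ⟨a, (TwoSidedIdeal.mem_comap _).mpr hx, rfl⟩

lemma comap_rres (K L : TwoSidedIdeal I.ringCon.Quotient) :
    (rres K L).comap (qHom I) = rres (K.comap (qHom I)) (L.comap (qHom I)) := by
  ext x
  rw [TwoSidedIdeal.mem_comap]
  simp only [rres, TwoSidedIdeal.mem_mk', Set.mem_setOf_eq]
  constructor
  · intro h a ha
    rw [TwoSidedIdeal.mem_comap] at ha ⊢
    simpa [map_mul] using h _ ha
  · intro h q hq
    obtain ⟨a, rfl⟩ := qHom_surj I q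
    have := (TwoSidedIdeal.mem_comap _).mp (h a ((TwoSidedIdeal.mem_comap _).mpr hq))
    simpa [map_mul] using this

lemma comap_lres (K L : TwoSidedIdeal I.ringCon.Quotient) :
    (lres K L).comap (qHom I) = lres (K.comap (qHom I)) (L.comap (qHom I)) := by
  ext x
  rw [TwoSidedIdeal.mem_comap]
  simp only [lres, TwoSidedIdeal.mem_mk', Set.mem_setOf_eq]
  constructor
  · intro h a ha
    rw [TwoSidedIdeal.mem_comap] at ha ⊢
    simpa [map_mul] using h _ ha
  · intro h q hq
    obtain ⟨a, rfl⟩ := qHom_surj I q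
    have := (TwoSidedIdeal.mem_comap _).mp (h a ((TwoSidedIdeal.mem_comap _).mpr hq))
    simpa [map_mul] using this

lemma span_le {S : Set R} {J : TwoSidedIdeal R} (h : S ⊆ J) : TwoSidedIdeal.span S ≤ J :=
  fun x hx => TwoSidedIdeal.mem_span_iff.mp hx J h

lemma pushQ_prod (A B : TwoSidedIdeal R) :
    pushQ I (prod A B) = prod (pushQ I A) (pushQ I B) := by
  apply le_antisymm
  · intro x hx
    rw [mem_pushQ] at hx
    obtain ⟨a, ha, rfl⟩ := hx
    have : a ∈ (prod (pushQ I A) (pushQ I B)).comap (qHom I) := by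
      refine TwoSidedIdeal.mem_span_iff.mp ha _ ?_
      rintro _ ⟨i, hi, j, hj, rfl⟩
      rw [SetLike.mem_coe, TwoSidedIdeal.mem_comap, map_mul]
      exact TwoSidedIdeal.subset_span
        ⟨_, (mem_pushQ I).mpr ⟨i, hi, rfl⟩, _, (mem_pushQ I).mpr ⟨j, hj, rfl⟩, rfl⟩
    exact (TwoSidedIdeal.mem_comap _).mp this
  · refine span_le ?_
    rintro _ ⟨p, hp, q, hq, rfl⟩
    simp only [SetLike.mem_coe, mem_pushQ] at hp hq ⊢
    obtain ⟨a, ha, rfl⟩ := hp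
    obtain ⟨b, hb, rfl⟩ := hq
    exact ⟨a * b, TwoSidedIdeal.subset_span ⟨a, ha, b, hb, rfl⟩, map_mul _ _ _⟩

lemma comap_inf (K L : TwoSidedIdeal I.ringCon.Quotient) :
    (K ⊓ L).comap (qHom I) = K.comap (qHom I) ⊓ L.comap (qHom I) := by
  ext x
  simp [TwoSidedIdeal.mem_inf, TwoSidedIdeal.mem_comap]

lemma comap_eq_top {J : TwoSidedIdeal I.ringCon.Quotient}
    (h : J.comap (qHom I) = ⊤) : J = ⊤ := by
  rw [eq_top_iff]
  intro x _
  obtain ⟨a, rfl⟩ := qHom_surj I x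
  have : a ∈ J.comap (qHom I) := h ▸ TwoSidedIdeal.mem_top _
  exact (TwoSidedIdeal.mem_comap _).mp this

end QuotAux

/-- every quotient of a pseudo BL-ring by a two-sided ideal is again a
pseudo BL-ring. -/
theorem stmt_12 {R : Type*} [NonUnitalRing R] (h : IsPseudoBLRing R)
    (I : TwoSidedIdeal R) : IsPseudoBLRing I.ringCon.Quotient := by
  obtain ⟨hgen, h1, h2⟩ := h
  refine ⟨?_, ?_, ?_⟩
  · -- GenByIdem
    intro q
    obtain ⟨x, rfl⟩ := qHom_surj I q
    obtain ⟨e, he, hex, hxe⟩ := hgen x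
    exact ⟨qHom I e, by rw [← map_mul, he], by rw [← map_mul, hex], by rw [← map_mul, hxe]⟩
  · -- PBLR1
    intro K L
    obtain ⟨e1, e2⟩ := h1 (K.comap (qHom I)) (L.comap (qHom I))
    constructor
    · calc K ⊓ L = pushQ I ((K ⊓ L).comap (qHom I)) := (pushQ_comap I _).symm
        _ = pushQ I (K.comap (qHom I) ⊓ L.comap (qHom I)) := by rw [comap_inf]
        _ = pushQ I (prod (K.comap (qHom I)) (lres (K.comap (qHom I)) (L.comap (qHom I)))) := by
            rw [e1]
        _ = prod (pushQ I (K.comap (qHom I)))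
              (pushQ I (lres (K.comap (qHom I)) (L.comap (qHom I)))) := pushQ_prod I _ _
        _ = prod K (lres K L) := by rw [pushQ_comap, ← comap_lres, pushQ_comap]
    · calc K ⊓ L = pushQ I ((K ⊓ L).comap (qHom I)) := (pushQ_comap I _).symm
        _ = pushQ I (K.comap (qHom I) ⊓ L.comap (qHom I)) := by rw [comap_inf]
        _ = pushQ I (prod (rres (K.comap (qHom I)) (L.comap (qHom I))) (K.comap (qHom I))) := by
            rw [e2]
        _ = prod (pushQ I (rres (K.comap (qHom I)) (L.comap (qHom I))))
              (pushQ I (K.comap (qHom I))) := pushQ_prod I _ _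
        _ = prod (rres K L) K := by rw [pushQ_comap, ← comap_rres, pushQ_comap]
  · -- PBLR2
    intro K L
    obtain ⟨e1, e2⟩ := h2 (K.comap (qHom I)) (L.comap (qHom I))
    constructor
    · refine comap_eq_top I (top_le_iff.mp ?_)
      rw [← e1, ← comap_rres, ← comap_rres]
      refine sup_le (fun x hx => ?_) (fun x hx => ?_) <;>
        rw [TwoSidedIdeal.mem_comap] at hx ⊢
      · exact TwoSidedIdeal.mem_sup_left hx
      · exact TwoSidedIdeal.mem_sup_right hx
    · refine comap_eq_top I (top_le_iff.mp ?_)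
      rw [← e2, ← comap_lres, ← comap_lres]
      refine sup_le (fun x hx => ?_) (fun x hx => ?_) <;>
        rw [TwoSidedIdeal.mem_comap] at hx ⊢
      · exact TwoSidedIdeal.mem_sup_left hx
      · exact TwoSidedIdeal.mem_sup_right hx

end PBL
end
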